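/- NDME block embedding of a linear ODE into a Lindblad equation: Let A₁, A₂ : ℝ → M_n(ℂ) be continuous with A₁(t) Hermitian positive semidefinite and A₂(t) Hermitian for every t, and let A₁(t)^{1/2} denote the positive semidefinite square root of A₁(t). Define the (n+1)×(n+1) block matrices H(t) = fromBlocks A₂(t) 0 0 0 and F(t) = fromBlocks √2·A₁(t)^{1/2} 0 0 0. Suppose ρ : ℝ → M_{n+1}(ℂ) is differentiable and satisfies ρ'(t) = −i(H(t)ρ(t) − ρ(t)H(t)) + F(t) ρ(t) F(t)ᴴ − ½(ρ(t) F(t)ᴴ F(t) + F(t)ᴴ F(t) ρ(t)). Then the upper-right n×1 block u(t) of ρ(t) satisfies u'(t) = −(A₁(t) + i A₂(t)) u(t). -/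

import Mathlib

/-!
Because `H` and `F` live on the upper-left block, only the left multiplications of the
Lindbladian reach the upper-right block `u` of `ρ`: the terms `F ρ Fᴴ` and `ρ FᴴF` vanish there,
leaving `u' = -(i A₂ + ½ FᴴF) u`, and `FᴴF = 2 A₁` because the square root is Hermitian.
-/

open Matrix
open scoped ComplexOrder

noncomputable def Matrix.PosSemidef.sqrt {n : Type*} [Fintype n] [DecidableEq n]
    {A : Matrix n n ℂ} (hA : A.PosSemidef) : Matrix n n ℂ :=
  hA.1.eigenvectorUnitary.1 * diagonal ((↑) ∘ Real.sqrt ∘ hA.1.eigenvalues) *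
    (star hA.1.eigenvectorUnitary : Matrix n n ℂ)

namespace Matrix.PosSemidef

variable {n : Type*} [Fintype n] [DecidableEq n] {A : Matrix n n ℂ}

theorem conjTranspose_sqrt (hA : A.PosSemidef) : hA.sqrtᴴ = hA.sqrt := by
  have hD : star ((↑) ∘ Real.sqrt ∘ hA.1.eigenvalues : n → ℂ) =
      (↑) ∘ Real.sqrt ∘ hA.1.eigenvalues := by
    ext i
    simp
  simp [sqrt, conjTranspose_mul, diagonal_conjTranspose, hD, star_eq_conjTranspose, mul_assoc]

theorem sqrt_mul_self (hA : A.PosSemidef) : hA.sqrt * hA.sqrt = A := by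
  set U : Matrix n n ℂ := hA.1.eigenvectorUnitary.1
  have hUU : star U * U = 1 := Unitary.star_mul_self_of_mem hA.1.eigenvectorUnitary.2
  have hDD : diagonal ((↑) ∘ Real.sqrt ∘ hA.1.eigenvalues : n → ℂ) *
      diagonal ((↑) ∘ Real.sqrt ∘ hA.1.eigenvalues) = diagonal ((↑) ∘ hA.1.eigenvalues) := by
    rw [diagonal_mul_diagonal]
    congr 1 with i
    simp [← Complex.ofReal_mul, Real.mul_self_sqrt (hA.eigenvalues_nonneg i)]
  conv_rhs => rw [hA.1.spectral_theorem, Unitary.conjStarAlgAut_apply]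
  calc hA.sqrt * hA.sqrt = U * diagonal ((↑) ∘ Real.sqrt ∘ hA.1.eigenvalues) * (star U * U) *
      diagonal ((↑) ∘ Real.sqrt ∘ hA.1.eigenvalues) * star U := by simp only [sqrt, U, mul_assoc]
    _ = _ := by rw [hUU, mul_one, mul_assoc _ (diagonal _) (diagonal _), hDD]; rfl

theorem conjTranspose_smul_sqrt_mul_smul_sqrt (hA : A.PosSemidef) (c : ℝ) :
    (c • hA.sqrt)ᴴ * (c • hA.sqrt) = (c ^ 2) • A := by
  rw [conjTranspose_smul, hA.conjTranspose_sqrt, smul_mul_smul_comm, hA.sqrt_mul_self,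
    star_trivial, sq]

end Matrix.PosSemidef

section Lindblad

variable {ι : Type*} [Fintype ι]

noncomputable def lindbladian (H L ρ : Matrix ι ι ℂ) : Matrix ι ι ℂ :=
  -(Complex.I • (H * ρ - ρ * H)) + L * ρ * Lᴴ - (1 / 2 : ℂ) • (ρ * Lᴴ * L + Lᴴ * L * ρ)

variable {m p : Type*} [Fintype m] [Fintype p]

theorem toBlocks₁₂_lindbladian_fromBlocks (K M : Matrix m m ℂ) (ρ : Matrix (m ⊕ p) (m ⊕ p) ℂ) :
    (lindbladian (fromBlocks K 0 0 0) (fromBlocks M 0 0 0) ρ).toBlocks₁₂ =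
      -(Complex.I • K + (1 / 2 : ℂ) • (Mᴴ * M)) * ρ.toBlocks₁₂ := by
  rw [← fromBlocks_toBlocks ρ]
  simp only [lindbladian, fromBlocks_conjTranspose, fromBlocks_multiply, fromBlocks_smul,
    fromBlocks_neg, fromBlocks_add, sub_eq_add_neg, toBlocks_fromBlocks₁₂, conjTranspose_zero,
    Matrix.zero_mul, Matrix.mul_zero, add_zero, zero_add, neg_zero]
  rw [Matrix.neg_mul, Matrix.add_mul, Matrix.smul_mul, Matrix.smul_mul, neg_add]

end Lindblad

theorem NDME_block_embedding_general {n : ℕ}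
    (A₁ A₂ : ℝ → Matrix (Fin n) (Fin n) ℂ)
    (hA₁ : ∀ t, (A₁ t).PosSemidef)
    (H F : ℝ → Matrix (Fin n ⊕ Fin 1) (Fin n ⊕ Fin 1) ℂ)
    (hH : ∀ t, H t = fromBlocks (A₂ t) 0 0 0)
    (hF : ∀ t, F t = fromBlocks ((Real.sqrt 2 : ℝ) • (hA₁ t).sqrt) 0 0 0)
    (ρ : ℝ → Matrix (Fin n ⊕ Fin 1) (Fin n ⊕ Fin 1) ℂ)
    (hρ : ∀ t i j, HasDerivAt (fun s => ρ s i j)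
      ((-(Complex.I • (H t * ρ t - ρ t * H t))
        + F t * ρ t * (F t)ᴴ
        - (1 / 2 : ℂ) • (ρ t * (F t)ᴴ * F t + (F t)ᴴ * F t * ρ t)) i j) t) :
    ∀ t i, HasDerivAt (fun s => ρ s (Sum.inl i) (Sum.inr 0))
      ((-((A₁ t + Complex.I • A₂ t) *ᵥ (fun i' => ρ t (Sum.inl i') (Sum.inr 0)))) i) t := by
  intro t i
  have hblock : (lindbladian (H t) (F t) (ρ t)).toBlocks₁₂ =
      -(A₁ t + Complex.I • A₂ t) * (ρ t).toBlocks₁₂ := by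
    rw [hH, hF, toBlocks₁₂_lindbladian_fromBlocks,
      (hA₁ t).conjTranspose_smul_sqrt_mul_smul_sqrt, Real.sq_sqrt zero_le_two,
      two_smul, ← two_smul ℂ, smul_smul]
    norm_num [add_comm]
  have hentry : lindbladian (H t) (F t) (ρ t) (.inl i) (.inr 0) =
      (-((A₁ t + Complex.I • A₂ t) *ᵥ fun i' => ρ t (.inl i') (.inr 0))) i := by
    change (lindbladian (H t) (F t) (ρ t)).toBlocks₁₂ i 0 = _
    rw [hblock, Matrix.neg_mul]
    rfl
  exact hentry ▸ hρ t (.inl i) (.inr 0)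

/-- **NDME block embedding of a linear ODE into a Lindblad equation.**
With `H(t) = fromBlocks (A₂ t) 0 0 0` and `F(t) = fromBlocks (√2 · A₁(t)^{1/2}) 0 0 0`,
if `ρ` satisfies the Lindblad equation
`ρ' = -i[H,ρ] + F ρ Fᴴ - ½(ρ FᴴF + FᴴF ρ)` (entrywise derivatives), then the
upper-right `n×1` block `u(t) i = ρ t (inl i) (inr 0)` satisfies
`u' = -(A₁ + i A₂) u`. -/
theorem NDME_block_embedding {n : ℕ}
    (A₁ A₂ : ℝ → Matrix (Fin n) (Fin n) ℂ)
    (hA₁cont : Continuous A₁) (hA₂cont : Continuous A₂)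
    (hA₁ : ∀ t, (A₁ t).PosSemidef) (hA₂ : ∀ t, (A₂ t).IsHermitian)
    (H F : ℝ → Matrix (Fin n ⊕ Fin 1) (Fin n ⊕ Fin 1) ℂ)
    (hH : ∀ t, H t = fromBlocks (A₂ t) 0 0 0)
    (hF : ∀ t, F t = fromBlocks ((Real.sqrt 2 : ℝ) • (hA₁ t).sqrt) 0 0 0)
    (ρ : ℝ → Matrix (Fin n ⊕ Fin 1) (Fin n ⊕ Fin 1) ℂ)
    (hρ : ∀ t i j, HasDerivAt (fun s => ρ s i j)
      ((-(Complex.I • (H t * ρ t - ρ t * H t))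
        + F t * ρ t * (F t)ᴴ
        - (1 / 2 : ℂ) • (ρ t * (F t)ᴴ * F t + (F t)ᴴ * F t * ρ t)) i j) t) :
    ∀ t i, HasDerivAt (fun s => ρ s (Sum.inl i) (Sum.inr 0))
      ((-((A₁ t + Complex.I • A₂ t) *ᵥ (fun i' => ρ t (Sum.inl i') (Sum.inr 0)))) i) t :=
  NDME_block_embedding_general A₁ A₂ hA₁ H F hH hF ρ hρ
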